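/- Let ρ^{ab}_p = (1−p)·I/9 + p·|Ω⟩⟨Ω| on ℂ³⊗ℂ³ where |Ω⟩ = (|00⟩+|11⟩+|22⟩)/√3 and 0 ≤ p ≤ 1. With {A_j}_{j=1}^9 the standard orthonormal Hermitian basis of 3×3 matrices, the total variance satisfies ∑_{j=1}^9 V(ρ^{ab}_p, A_j⊗I + I⊗A_j) = 16/3 + (4/3)p, where V(ρ,H) = tr(ρH²) − (tr ρH)². In particular this quantity is ≥ 16/3 > 4 for all p, so the variance-based criterion never detects entanglement of ρ^{ab}_p. -/

import Mathlib

/-! The mixture structure of `ρ_p` together with `⟨Ω|X ⊗ Y|Ω⟩ = tr(X Yᵀ)/3` makes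
`tr(ρ_p (X ⊗ Y))` explicit. Expanding `(A ⊗ 1 + 1 ⊗ A)²` then gives
`V(ρ_p, A ⊗ 1 + 1 ⊗ A) = (2/3) tr A² + (2p/3) tr(A Aᵀ) − (2(1+p)/9) (tr A)²`.
Over the basis, `tr A_j² = 1`, `A_jᵀ = ±A_j` with six symmetric and three antisymmetric
elements, and `tr A_j ≠ 0` only for the three diagonal units, so the sum is
`6 + 2p − 2(1+p)/3`. -/

open scoped Kronecker

noncomputable section

/-- The maximally entangled vector `|Ω⟩ = (|00⟩+|11⟩+|22⟩)/√3` in `ℂ³⊗ℂ³`. -/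
def OmegaVec : Fin 3 × Fin 3 → ℂ :=
  fun p => if p.1 = p.2 then (1 / (Real.sqrt 3 : ℂ)) else 0

/-- The isotropic state `ρ_p = (1-p)·I/9 + p·|Ω⟩⟨Ω|` on `ℂ³⊗ℂ³`. -/
def rhoP (p : ℝ) : Matrix (Fin 3 × Fin 3) (Fin 3 × Fin 3) ℂ :=
  ((1 - p : ℂ) / 9) • (1 : Matrix (Fin 3 × Fin 3) (Fin 3 × Fin 3) ℂ)
    + (p : ℂ) • Matrix.vecMulVec OmegaVec (fun q => star (OmegaVec q))

/-- The standard orthonormal Hermitian basis of the `3×3` matrices. -/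
def stdHermBasis : Fin 9 → Matrix (Fin 3) (Fin 3) ℂ :=
  ![Matrix.single 0 0 1,
    Matrix.single 1 1 1,
    Matrix.single 2 2 1,
    ((Real.sqrt 2 : ℂ))⁻¹ • (Matrix.single 0 1 1 + Matrix.single 1 0 1),
    ((Real.sqrt 2 : ℂ))⁻¹ • (Matrix.single 0 2 1 + Matrix.single 2 0 1),
    ((Real.sqrt 2 : ℂ))⁻¹ • (Matrix.single 1 2 1 + Matrix.single 2 1 1),
    (Complex.I * ((Real.sqrt 2 : ℂ))⁻¹) • (Matrix.single 0 1 1 - Matrix.single 1 0 1),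
    (Complex.I * ((Real.sqrt 2 : ℂ))⁻¹) • (Matrix.single 0 2 1 - Matrix.single 2 0 1),
    (Complex.I * ((Real.sqrt 2 : ℂ))⁻¹) • (Matrix.single 1 2 1 - Matrix.single 2 1 1)]

/-- The variance `V(ρ,H) = tr(ρH²) − (tr ρH)²`. -/
def matVariance (ρ H : Matrix (Fin 3 × Fin 3) (Fin 3 × Fin 3) ℂ) : ℂ :=
  (ρ * (H * H)).trace - ((ρ * H).trace) ^ 2

open Matrix

theorem kronecker_one_add_one_kronecker_mul_self {n R : Type*} [Fintype n] [DecidableEq n]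
    [CommSemiring R] (A : Matrix n n R) :
    (A ⊗ₖ (1 : Matrix n n R) + 1 ⊗ₖ A) * (A ⊗ₖ 1 + 1 ⊗ₖ A)
      = (A * A) ⊗ₖ 1 + 2 • (A ⊗ₖ A) + 1 ⊗ₖ (A * A) := by
  simp only [Matrix.add_mul, Matrix.mul_add, ← mul_kronecker_mul, Matrix.one_mul,
    Matrix.mul_one, two_nsmul]
  abel

theorem trace_vecMulVec_diagonal_mul_kronecker {n R : Type*} [Fintype n] [DecidableEq n]
    [CommSemiring R] (a b : R) (X Y : Matrix n n R) :
    (vecMulVec (fun q : n × n => if q.1 = q.2 then a else 0)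
        (fun q : n × n => if q.1 = q.2 then b else 0) * (X ⊗ₖ Y)).trace
      = a * b * (X * Yᵀ).trace := by
  simp only [trace, diag_apply, Matrix.mul_apply, vecMulVec_apply, mul_ite, ite_mul, zero_mul,
    mul_zero, kroneckerMap_apply, Fintype.sum_prod_type, Finset.sum_ite_eq, Finset.mem_univ,
    ↓reduceIte, Finset.sum_ite_irrel, Finset.sum_const_zero, transpose_apply, Finset.mul_sum]
  exact Finset.sum_comm

theorem trace_rhoP_mul_kronecker (p : ℝ) (X Y : Matrix (Fin 3) (Fin 3) ℂ) :
    (rhoP p * (X ⊗ₖ Y)).trace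
      = (1 - p) / 9 * (X.trace * Y.trace) + p / 3 * (X * Yᵀ).trace := by
  have star_omegaVec : (fun q => star (OmegaVec q)) = fun q : Fin 3 × Fin 3 =>
      if q.1 = q.2 then (1 / (Real.sqrt 3 : ℂ)) else 0 := by
    ext q
    simp [OmegaVec, apply_ite star, Complex.conj_ofReal]
  have inv_sqrt_three_sq : (1 / (Real.sqrt 3 : ℂ)) * (1 / (Real.sqrt 3 : ℂ)) = 1 / 3 := by
    rw [div_mul_div_comm, one_mul, ← Complex.ofReal_mul, Real.mul_self_sqrt (by norm_num)]
    norm_num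
  rw [rhoP, star_omegaVec, Matrix.add_mul, Matrix.smul_mul, Matrix.smul_mul, Matrix.one_mul,
    trace_add, trace_smul, trace_smul, trace_kronecker]
  unfold OmegaVec
  rw [trace_vecMulVec_diagonal_mul_kronecker, inv_sqrt_three_sq, smul_eq_mul, smul_eq_mul]
  ring

theorem matVariance_rhoP_kronecker_one_add_one_kronecker (p : ℝ) (A : Matrix (Fin 3) (Fin 3) ℂ) :
    matVariance (rhoP p) (A ⊗ₖ 1 + 1 ⊗ₖ A)
      = 2 / 3 * (A * A).trace + 2 * p / 3 * (A * Aᵀ).trace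
        - 2 * (1 + p) / 9 * A.trace ^ 2 := by
  rw [matVariance, kronecker_one_add_one_kronecker_mul_self]
  simp only [Matrix.mul_add, Matrix.mul_smul, trace_add, trace_smul, trace_rhoP_mul_kronecker,
    trace_one, Matrix.one_mul, Matrix.mul_one, transpose_one, Fintype.card_fin, trace_mul_comm A]
  simp only [trace_transpose, nsmul_eq_mul]
  push_cast
  ring

theorem stdHermBasis_trace (j : Fin 9) :
    (stdHermBasis j).trace = if (j : ℕ) < 3 then 1 else 0 := by
  fin_cases j <;> simp [stdHermBasis, trace, Fin.sum_univ_three, single_apply]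

theorem stdHermBasis_transpose (j : Fin 9) :
    (stdHermBasis j)ᵀ = if (j : ℕ) < 6 then stdHermBasis j else -stdHermBasis j := by
  fin_cases j <;> simp [stdHermBasis, transpose_single] <;> module

theorem stdHermBasis_trace_mul_self (j : Fin 9) :
    (stdHermBasis j * stdHermBasis j).trace = 1 := by
  have inv_sqrt_two_sq : ((Real.sqrt 2 : ℂ))⁻¹ ^ 2 = 1 / 2 := by
    rw [inv_pow, ← Complex.ofReal_pow, Real.sq_sqrt (by norm_num)]
    norm_num
  fin_cases j <;> simp [stdHermBasis, trace, Fin.sum_univ_three, Matrix.mul_apply, single_apply] <;>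
    ring_nf <;> simp only [Complex.I_sq, inv_sqrt_two_sq] <;> norm_num

theorem sum_stdHermBasis_trace_mul_self :
    ∑ j, (stdHermBasis j * stdHermBasis j).trace = 9 := by
  simp [stdHermBasis_trace_mul_self]

theorem sum_stdHermBasis_trace_mul_transpose :
    ∑ j, (stdHermBasis j * (stdHermBasis j)ᵀ).trace = 3 := by
  simp only [stdHermBasis_transpose, apply_ite, Matrix.mul_neg, trace_neg,
    stdHermBasis_trace_mul_self, Fin.sum_univ_succ]
  norm_num

theorem sum_stdHermBasis_trace_sq : ∑ j, (stdHermBasis j).trace ^ 2 = 3 := by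
  simp only [stdHermBasis_trace, ite_pow, one_pow, Fin.sum_univ_succ]
  norm_num

theorem total_variance_isotropic_general (p : ℝ) (hp0 : 0 ≤ p) :
    (∑ j : Fin 9, matVariance (rhoP p)
        ((stdHermBasis j) ⊗ₖ (1 : Matrix (Fin 3) (Fin 3) ℂ)
          + (1 : Matrix (Fin 3) (Fin 3) ℂ) ⊗ₖ (stdHermBasis j))
      = (16 / 3 : ℂ) + (4 / 3 : ℂ) * (p : ℂ)) ∧
    (4 : ℝ) < 16 / 3 + (4 / 3) * p := by
  constructor
  · simp only [matVariance_rhoP_kronecker_one_add_one_kronecker, Finset.sum_sub_distrib,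
      Finset.sum_add_distrib, ← Finset.mul_sum, sum_stdHermBasis_trace_mul_self,
      sum_stdHermBasis_trace_mul_transpose, sum_stdHermBasis_trace_sq]
    ring
  · linarith

/-- For the isotropic state `ρ_p` on `ℂ³⊗ℂ³`, the total variance over the local
observable basis is `∑_j V(ρ_p, A_j⊗I + I⊗A_j) = 16/3 + (4/3)p ≥ 16/3 > 4`, so
the variance criterion never detects the entanglement of `ρ_p`. -/
theorem total_variance_isotropic (p : ℝ) (hp0 : 0 ≤ p) (hp1 : p ≤ 1) :
    (∑ j : Fin 9, matVariance (rhoP p)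
        ((stdHermBasis j) ⊗ₖ (1 : Matrix (Fin 3) (Fin 3) ℂ)
          + (1 : Matrix (Fin 3) (Fin 3) ℂ) ⊗ₖ (stdHermBasis j))
      = (16 / 3 : ℂ) + (4 / 3 : ℂ) * (p : ℂ)) ∧
    (4 : ℝ) < 16 / 3 + (4 / 3) * p :=
  total_variance_isotropic_general p hp0

end
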